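/- arXiv:1512.06275 — 2 statements merged into one kernel-verified Lean document; each statement's English description precedes it below -/
import Mathlib

section
/- The quandle F = M × X with (a,i)*(b,j) = ((1−t)·a + t·b + e_i − e_j, j) is the free medial quandle on the generating set {(0,i) : i ∈ X}: every map from {(0,i) : i ∈ X} to a medial quandle Q extends uniquely to a quandle homomorphism F → Q. -/
open LaurentPolynomial

/-- The standard basis vectors `e_i` of `⊕_{x ∈ X∖{z}} ℤ[t,t⁻¹]`, with `e_z = 0`. -/
noncomputable def freeMQ.e {X : Type*} [DecidableEq X] (z : X) (i : X) :
    {x : X // x ≠ z} →₀ LaurentPolynomial ℤ :=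
  if h : i = z then 0 else Finsupp.single ⟨i, h⟩ 1

/-- The operation `(a,i) * (b,j) = ((1-t)·a + t·b + e_i - e_j, j)` on `M × X`. -/
noncomputable def freeMQ.op {X : Type*} [DecidableEq X] (z : X)
    (p q : ({x : X // x ≠ z} →₀ LaurentPolynomial ℤ) × X) :
    ({x : X // x ≠ z} →₀ LaurentPolynomial ℤ) × X :=
  (((1 - T 1 : LaurentPolynomial ℤ)) • p.1 + (T 1 : LaurentPolynomial ℤ) • q.1 + freeMQ.e z p.2 - freeMQ.e z q.2, q.2)

/-- The left division `(a,i) \ (b,j) = ((1-t⁻¹)·a + t⁻¹·(b + e_j - e_i), j)` on `M × X`. -/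
noncomputable def freeMQ.ld {X : Type*} [DecidableEq X] (z : X)
    (p q : ({x : X // x ≠ z} →₀ LaurentPolynomial ℤ) × X) :
    ({x : X // x ≠ z} →₀ LaurentPolynomial ℤ) × X :=
  (((1 - T (-1) : LaurentPolynomial ℤ)) • p.1 + (T (-1) : LaurentPolynomial ℤ) • (q.1 + freeMQ.e z q.2 - freeMQ.e z p.2), q.2)


/-!
Uniqueness: the set on which two homomorphisms `F → Q` agree is invariant under left
multiplication by the generators `(0, i)`. Its periods in the `M`-coordinate therefore form a
`ℤ[t,t⁻¹]`-submodule of `M` containing every `e_i`, i.e. all of `M`, so the set is everything.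

Existence: in a medial quandle the displacement group `Dis(Q)`, generated by the `L_x L_y⁻¹`, is
abelian, and conjugation by `σ = L_{ψ z}` makes it a `ℤ[t,t⁻¹]`-module. The linear map
`δ : M → Dis(Q)` with `δ(e_i) = L_{ψ i} σ⁻¹` acts on `Q` by automorphisms, and
`(a, j) ↦ δ(a)(ψ j)` is the homomorphism: it rests on `L_{δ(a)(ψ i)} = δ((1 - t) a + e_i) σ`.
-/

open Quandles

namespace Rack

variable {R : Type*} [Rack R]

def autSubgroup (R : Type*) [Rack R] : Subgroup (R ≃ R) where
  carrier := {g | ∀ x y, g (x ◃ y) = g x ◃ g y}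
  one_mem' _ _ := rfl
  mul_mem' hg hh x y := by simp [Equiv.Perm.mul_apply, hh x y, hg _ _]
  inv_mem' {g} hg x y := g.injective <| by simp [hg _ _]

theorem act'_mem_autSubgroup (x : R) : act' x ∈ autSubgroup R := fun _ _ => Shelf.self_distrib

theorem act'_apply_of_mem_autSubgroup {g : R ≃ R} (hg : g ∈ autSubgroup R) (x : R) :
    act' (g x) = g * act' x * g⁻¹ := by
  ext y
  simpa [act'_apply] using (hg x (g⁻¹ y)).symm

def displacement (R : Type*) [Rack R] : Subgroup (R ≃ R) :=
  Subgroup.closure {g | ∃ x y : R, act' x * (act' y)⁻¹ = g}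

theorem act'_mul_inv_mem_displacement (x y : R) : act' x * (act' y)⁻¹ ∈ displacement R :=
  Subgroup.subset_closure ⟨x, y, rfl⟩

theorem displacement_le_autSubgroup : displacement R ≤ autSubgroup R :=
  (Subgroup.closure_le _).mpr <| by
    rintro _ ⟨x, y, rfl⟩
    exact mul_mem (act'_mem_autSubgroup x) (inv_mem (act'_mem_autSubgroup y))

theorem autSubgroup_le_normalizer :
    autSubgroup R ≤ Subgroup.normalizer (displacement R : Set (R ≃ R)) := by
  have conj_mem : ∀ g ∈ autSubgroup R, ∀ d ∈ displacement R, g * d * g⁻¹ ∈ displacement R := by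
    intro g hg
    refine (Subgroup.closure_le ((displacement R).comap (MulAut.conj g).toMonoidHom)).mpr ?_
    rintro _ ⟨x, y, rfl⟩
    have := act'_mul_inv_mem_displacement (g x) (g y)
    rw [act'_apply_of_mem_autSubgroup hg, act'_apply_of_mem_autSubgroup hg] at this
    simpa [mul_assoc] using this
  intro g hg d
  refine ⟨conj_mem g hg d, fun h => ?_⟩
  simpa [mul_assoc] using conj_mem g⁻¹ (inv_mem hg) _ h

class IsMedial (R : Type*) [Shelf R] : Prop where
  medial : ∀ x y u v : R, (x ◃ y) ◃ (u ◃ v) = (x ◃ u) ◃ (y ◃ v)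

theorem IsMedial.act'_mul_inv_mul_comm [IsMedial R] (x y u : R) :
    act' y * (act' x)⁻¹ * act' u = act' u * (act' x)⁻¹ * act' y := by
  have h : act' (x ◃ y) * act' u = act' (x ◃ u) * act' y := by
    ext v
    exact IsMedial.medial x y u v
  rw [ad_conj, ad_conj] at h
  simpa [mul_assoc] using h

instance [IsMedial R] : IsMulCommutative (displacement R) := by
  refine Subgroup.isMulCommutative_closure ?_
  rintro _ ⟨a, b, rfl⟩ _ ⟨c, d, rfl⟩
  have h₁ := IsMedial.act'_mul_inv_mul_comm b a c
  have h₂ := congrArg (·⁻¹) (IsMedial.act'_mul_inv_mul_comm a d b)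
  simp only [mul_inv_rev, inv_inv, ← mul_assoc] at h₂
  calc act' a * (act' b)⁻¹ * (act' c * (act' d)⁻¹)
      = act' a * (act' b)⁻¹ * act' c * (act' d)⁻¹ := by group
    _ = act' c * ((act' b)⁻¹ * act' a * (act' d)⁻¹) := by rw [h₁]; group
    _ = act' c * (act' d)⁻¹ * (act' a * (act' b)⁻¹) := by rw [h₂]; group

end Rack

noncomputable abbrev Quandle.ofExistsUnique {Q : Type*} (op : Q → Q → Q) (hidem : ∀ x, op x x = x)
    (hldist : ∀ x y w, op x (op y w) = op (op x y) (op x w)) (hlq : ∀ x y, ∃! u, op x u = y) :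
    Quandle Q where
  act := op
  self_distrib := hldist _ _ _
  invAct x y := (hlq x y).exists.choose
  left_inv x y := (hlq x (op x y)).unique (hlq x (op x y)).exists.choose_spec rfl
  right_inv x y := (hlq x y).exists.choose_spec
  fix := hidem _

namespace LaurentPolynomial

section Module

variable {V : Type*} [AddCommGroup V] [Module ℤ[T;T⁻¹] V]

theorem T_smul_T_neg_smul (n : ℤ) (v : V) : (T n : ℤ[T;T⁻¹]) • (T (-n) : ℤ[T;T⁻¹]) • v = v := by
  rw [smul_smul, ← T_add, add_neg_cancel, T_zero, one_smul]

theorem smul_mem_of_T_smul_mem {N : AddSubgroup V} (h₁ : ∀ v ∈ N, (T 1 : ℤ[T;T⁻¹]) • v ∈ N)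
    (h₂ : ∀ v ∈ N, (T (-1) : ℤ[T;T⁻¹]) • v ∈ N) (p : ℤ[T;T⁻¹]) {v : V} (hv : v ∈ N) :
    p • v ∈ N := by
  have hT (n : ℤ) : (T n : ℤ[T;T⁻¹]) • v ∈ N := by
    induction n with
    | zero => simpa [T_zero] using hv
    | succ n ih => rw [add_comm, T_add, mul_smul]; exact h₁ _ ih
    | pred n ih => rw [sub_eq_neg_add, T_add, mul_smul]; exact h₂ _ ih
  induction p using LaurentPolynomial.induction_on' with
  | add p q hp hq => rw [add_smul]; exact add_mem hp hq
  | C_mul_T n c =>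
    rw [mul_smul, eq_intCast C c, Int.cast_smul_eq_zsmul]
    exact zsmul_mem (hT n) c

end Module

section Lift

variable {ι A : Type*} [CommGroup A]

/-- The `ℤ[T;T⁻¹]`-linear extension of `a`, where `T` acts on `A` through `τ`. -/
noncomputable def liftMulAut (τ : MulAut A) (a : ι → A) : (ι →₀ ℤ[T;T⁻¹]) →+ Additive A :=
  Finsupp.liftAddHom fun i =>
    (Finsupp.liftAddHom fun n => zmultiplesHom _ (Additive.ofMul ((τ ^ n) (a i)))).comp
      AddMonoidAlgebra.coeffAddEquiv.toAddMonoidHom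

theorem liftMulAut_single_T (τ : MulAut A) (a : ι → A) (i : ι) (n : ℤ) :
    liftMulAut τ a (Finsupp.single i (T n)) = .ofMul ((τ ^ n) (a i)) := by
  rw [liftMulAut, Finsupp.liftAddHom_apply_single, AddMonoidHom.comp_apply]
  simp [T, AddMonoidAlgebra.coeff_single, -single_eq_C_mul_T]

theorem liftMulAut_single_one (τ : MulAut A) (a : ι → A) (i : ι) :
    liftMulAut τ a (Finsupp.single i 1) = .ofMul (a i) := by
  simpa [T_zero] using liftMulAut_single_T τ a i 0

theorem toMul_liftMulAut_T_smul (τ : MulAut A) (a : ι → A) (m : ι →₀ ℤ[T;T⁻¹]) :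
    (liftMulAut τ a ((T 1 : ℤ[T;T⁻¹]) • m)).toMul = τ (liftMulAut τ a m).toMul := by
  suffices (liftMulAut τ a).comp (DistribSMul.toAddMonoidHom _ (T 1 : ℤ[T;T⁻¹])) =
      (MulEquiv.toAdditive τ : Additive A →+ Additive A).comp (liftMulAut τ a) from
    congrArg Additive.toMul (DFunLike.congr_fun this m)
  ext i n
  simp only [AddMonoidHom.comp_apply, Finsupp.singleAddHom_apply,
    AddMonoidAlgebra.singleAddHom_apply, DistribSMul.toAddMonoidHom_apply, AddMonoidHom.coe_coe]
  rw [← T, Finsupp.smul_single, smul_eq_mul, ← T_add, liftMulAut_single_T, liftMulAut_single_T]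
  simp [zpow_add, MulAut.mul_apply]

end Lift

end LaurentPolynomial

namespace freeMQ

open Rack
open scoped IsMulCommutative

abbrev M (X : Type*) (z : X) : Type _ := {x : X // x ≠ z} →₀ ℤ[T;T⁻¹]

variable {X : Type*}

section Displacement

variable (z : X) {R : Type*} [Quandle R] [IsMedial R] (ψ : X → R)

noncomputable def disp (m : M X z) : R ≃ R :=
  ((liftMulAut
    (Subgroup.normalizerMonoidHom (H := displacement R)
      ⟨act' (ψ z), autSubgroup_le_normalizer (act'_mem_autSubgroup (ψ z))⟩)
    (fun x : {x : X // x ≠ z} => ⟨act' (ψ x) * (act' (ψ z))⁻¹, act'_mul_inv_mem_displacement _ _⟩)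
    m).toMul : displacement R)

theorem disp_mem_autSubgroup (m : M X z) : disp z ψ m ∈ autSubgroup R :=
  displacement_le_autSubgroup (Subtype.prop _)

theorem disp_add (m m' : M X z) : disp z ψ (m + m') = disp z ψ m * disp z ψ m' := by
  simp [disp]

theorem disp_neg (m : M X z) : disp z ψ (-m) = (disp z ψ m)⁻¹ := by
  simp [disp]

theorem disp_zero : disp z ψ 0 = 1 := by
  simp [disp]

theorem act'_mul_disp (m : M X z) :
    act' (ψ z) * disp z ψ m = disp z ψ ((T 1 : ℤ[T;T⁻¹]) • m) * act' (ψ z) := by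
  simp [disp, toMul_liftMulAut_T_smul]

noncomputable def lift (p : M X z × X) : R := disp z ψ p.1 (ψ p.2)

theorem lift_gen (i : X) : lift z ψ (0, i) = ψ i := by
  simp [lift, disp_zero]

end Displacement

variable [DecidableEq X]

theorem e_self (z : X) : e z z = 0 := dif_pos rfl

theorem op_zero_left {z : X} (i : X) (c : M X z) (j : X) :
    op z (0, i) (c, j) = ((T 1 : ℤ[T;T⁻¹]) • c + e z i - e z j, j) := by
  simp [op]

theorem op_zero_left_T_neg_smul {z : X} (i : X) (b : M X z) (j : X) :
    op z (0, i) ((T (-1) : ℤ[T;T⁻¹]) • (b + e z j), j) = (b + e z i, j) := by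
  rw [op_zero_left, T_smul_T_neg_smul, add_right_comm, add_sub_cancel_right]

section Generation

variable {z : X}

def periods (S : Set (M X z × X)) : AddSubgroup (M X z) where
  carrier := {a | ∀ b j, (b + a, j) ∈ S ↔ (b, j) ∈ S}
  zero_mem' := by simp
  add_mem' {a a'} ha ha' b j := by rw [← add_assoc, ha', ha]
  neg_mem' {a} ha b j := by rw [← ha (b + -a), neg_add_cancel_right]

variable {S : Set (M X z × X)} (hS : ∀ i q, op z (0, i) q ∈ S ↔ q ∈ S)
include hS

theorem e_mem_periods (i : X) : e z i ∈ periods S := fun b j => by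
  rw [← op_zero_left_T_neg_smul, hS, ← hS z, op_zero_left_T_neg_smul, e_self, add_zero]

theorem T_smul_mem_periods {a : M X z} (ha : a ∈ periods S) :
    (T 1 : ℤ[T;T⁻¹]) • a ∈ periods S := fun b j => by
  have h : (T (-1) : ℤ[T;T⁻¹]) • (b + (T 1 : ℤ[T;T⁻¹]) • a + e z j)
      = (T (-1) : ℤ[T;T⁻¹]) • (b + e z j) + a := by
    rw [add_right_comm, smul_add, smul_smul, ← T_add, neg_add_cancel, T_zero, one_smul]
  rw [← add_zero (b + _), ← e_self z, ← op_zero_left_T_neg_smul, hS, h, ha, ← hS z,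
    op_zero_left_T_neg_smul, e_self, add_zero]

theorem T_neg_smul_mem_periods {a : M X z} (ha : a ∈ periods S) :
    (T (-1) : ℤ[T;T⁻¹]) • a ∈ periods S := fun b j => by
  rw [← hS z, ← hS z (b, j), op_zero_left, op_zero_left, smul_add, T_smul_T_neg_smul, e_self,
    add_zero, add_zero, add_sub_right_comm, ha]

theorem periods_eq_top : periods S = ⊤ := by
  refine (AddSubgroup.eq_top_iff' _).mpr fun m => ?_
  induction m using Finsupp.induction_linear with
  | zero => exact zero_mem _
  | add m m' hm hm' => exact add_mem hm hm'
  | single x p =>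
    rw [← Finsupp.smul_single_one]
    refine smul_mem_of_T_smul_mem (fun _ => T_smul_mem_periods hS)
      (fun _ => T_neg_smul_mem_periods hS) p ?_
    simpa [e, x.2] using e_mem_periods hS x

theorem mem_of_forall_gen_mem (hgen : ∀ i, (0, i) ∈ S) (p : M X z × X) : p ∈ S := by
  have := (periods_eq_top hS).ge (AddSubgroup.mem_top p.1) 0 p.2
  rw [zero_add] at this
  exact this.mpr (hgen p.2)

end Generation

theorem hom_ext (z : X) {R : Type*} [Rack R] {Ψ Ψ' : M X z × X → R}
    (hΨ : ∀ p q, Ψ (op z p q) = Ψ p ◃ Ψ q) (hΨ' : ∀ p q, Ψ' (op z p q) = Ψ' p ◃ Ψ' q)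
    (hgen : ∀ i, Ψ (0, i) = Ψ' (0, i)) : Ψ = Ψ' :=
  funext <| mem_of_forall_gen_mem (S := {p | Ψ p = Ψ' p})
    (fun i q => by rw [Set.mem_ofPred_eq, hΨ, hΨ', hgen, left_cancel]; rfl) hgen

section Existence

variable (z : X) {R : Type*} [Quandle R] [IsMedial R] (ψ : X → R)

theorem disp_e_mul (i : X) : disp z ψ (e z i) * act' (ψ z) = act' (ψ i) := by
  by_cases h : i = z
  · subst h
    rw [e_self, disp_zero, one_mul]
  · simp [disp, e, h, liftMulAut_single_one]

theorem act'_lift (a : M X z) (i : X) :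
    act' (lift z ψ (a, i)) = disp z ψ ((1 - T 1 : ℤ[T;T⁻¹]) • a + e z i) * act' (ψ z) :=
  calc act' (lift z ψ (a, i))
      = disp z ψ a * (disp z ψ (e z i) * act' (ψ z)) * disp z ψ (-a) := by
        rw [lift, act'_apply_of_mem_autSubgroup (disp_mem_autSubgroup z ψ a), disp_e_mul,
          disp_neg]
    _ = disp z ψ a * disp z ψ (e z i) * (act' (ψ z) * disp z ψ (-a)) := by
        simp only [mul_assoc]
    _ = disp z ψ (a + e z i + (T 1 : ℤ[T;T⁻¹]) • -a) * act' (ψ z) := by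
        rw [act'_mul_disp, disp_add, disp_add]
        simp only [mul_assoc]
    _ = disp z ψ ((1 - T 1 : ℤ[T;T⁻¹]) • a + e z i) * act' (ψ z) := by
        congr 2
        module

theorem act'_base_apply_gen (j : X) : act' (ψ z) (ψ j) = disp z ψ (-e z j) (ψ j) := by
  have : act' (ψ z) = disp z ψ (-e z j) * act' (ψ j) := by
    rw [disp_neg, ← disp_e_mul z ψ j, inv_mul_cancel_left]
  rw [this, Equiv.Perm.mul_apply, act'_apply, Quandle.fix]

theorem lift_op (p q : M X z × X) : lift z ψ (op z p q) = lift z ψ p ◃ lift z ψ q := by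
  obtain ⟨a, i⟩ := p
  obtain ⟨b, j⟩ := q
  symm
  calc lift z ψ (a, i) ◃ lift z ψ (b, j)
      = (disp z ψ ((1 - T 1 : ℤ[T;T⁻¹]) • a + e z i) * (act' (ψ z) * disp z ψ b)) (ψ j) := by
        rw [← act'_apply, act'_lift]; rfl
    _ = (disp z ψ ((1 - T 1 : ℤ[T;T⁻¹]) • a + e z i) * disp z ψ ((T 1 : ℤ[T;T⁻¹]) • b))
          (act' (ψ z) (ψ j)) := by
        rw [act'_mul_disp, ← mul_assoc]; rfl
    _ = disp z ψ ((1 - T 1 : ℤ[T;T⁻¹]) • a + (T 1 : ℤ[T;T⁻¹]) • b + e z i - e z j) (ψ j) := by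
        rw [act'_base_apply_gen, ← Equiv.Perm.mul_apply, ← disp_add, ← disp_add]
        congr 3
        abel

end Existence

end freeMQ

/-- `F = M × X` is the free medial quandle on `{(0,i) : i ∈ X}`: every map of the
generators into a medial quandle `Q` extends uniquely to a quandle homomorphism. -/
theorem freeMQ_is_free {X : Type*} [DecidableEq X] (z : X)
    {Q : Type*} (opQ : Q → Q → Q)
    (hidem : ∀ x, opQ x x = x)
    (hldist : ∀ x y w, opQ x (opQ y w) = opQ (opQ x y) (opQ x w))
    (hlq : ∀ x y, ∃! u, opQ x u = y)
    (hmed : ∀ x y u v, opQ (opQ x y) (opQ u v) = opQ (opQ x u) (opQ y v))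
    (ψ : X → Q) :
    ∃! Ψ : (({x : X // x ≠ z} →₀ LaurentPolynomial ℤ) × X) → Q,
      (∀ p q, Ψ (freeMQ.op z p q) = opQ (Ψ p) (Ψ q)) ∧
      (∀ i : X, Ψ ((0 : {x : X // x ≠ z} →₀ LaurentPolynomial ℤ), i) = ψ i) := by
  let _ : Quandle Q := Quandle.ofExistsUnique opQ hidem hldist hlq
  have : Rack.IsMedial Q := ⟨hmed⟩
  refine ⟨freeMQ.lift z ψ, ⟨freeMQ.lift_op z ψ, freeMQ.lift_gen z ψ⟩, ?_⟩
  rintro Ψ ⟨hΨ, hgen⟩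
  refine freeMQ.hom_ext z hΨ (freeMQ.lift_op z ψ) fun i => ?_
  rw [hgen, freeMQ.lift_gen]
end

section
/- Let f = Σ_{r=0}^{s} c_r t^r ∈ ℤ[t] with c_0 and c_s invertible (i.e. ±1), and let Q be a medial quandle in which α^{f(L)} = 1 for all α ∈ Dis(Q), generated by X ⊆ Q with fixed z ∈ X. Then Dis(Q) is generated as a group by {(L_x L_z^{-1})^{L^r} : x ∈ X∖{z}, 0 ≤ r < s}. -/
/-!
Conjugation by a left translation `L_a` acts on the abelian group `Dis(Q)` independently of `a`;
call this automorphism `σ`. Writing `e q = L_q L_z⁻¹`, left distributivity gives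
`e (a ▷ b) = σ (e b) · σ (e a)⁻¹ · e a`, so the elements `q` whose whole `σ`-orbit `σⁿ (e q)` lies
in the proposed subgroup `E` form a subquandle. It contains `X`: for `x ∈ X` the sequence
`n ↦ σⁿ (e x)` satisfies the recurrence `∏ (σ^{n+r} (e x))^{c_r} = 1`, whose extreme coefficients
are units, so its terms are determined by any `s` consecutive ones, and the first `s` are among
the generators of `E`. Hence every `e q` lies in `E`, and these generate `Dis(Q)`.
-/

section Recurrence

variable {G : Type*} [Group G]

theorem Subgroup.zpow_mem_iff_of_isUnit (E : Subgroup G) {x : G} {u : ℤ} (hu : IsUnit u) :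
    x ^ u ∈ E ↔ x ∈ E := by
  rcases Int.isUnit_iff.mp hu with rfl | rfl <;> simp

/-- Both extreme coefficients being units lets the recurrence be solved for its last term
(going up) and for its first term (going down), so a window of `s` consecutive terms in `E`
slides in both directions. -/
theorem Subgroup.mem_of_recurrence (E : Subgroup G) (x : ℤ → G) (s : ℕ) (c : ℕ → ℤ)
    (hc0 : IsUnit (c 0)) (hcs : IsUnit (c s))
    (hrec : ∀ n : ℤ, ((List.range (s + 1)).map fun r : ℕ => x (n + r) ^ c r).prod = 1)
    (hinit : ∀ r < s, x r ∈ E) (n : ℤ) : x n ∈ E := by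
  let window (n : ℤ) : Prop := ∀ r < s, x (n + r) ∈ E
  have hup : ∀ n, window n → x (n + s) ∈ E := by
    intro n hn
    have hlast := hrec n
    rw [List.prod_range_succ] at hlast
    replace hlast := eq_inv_of_mul_eq_one_right hlast
    rw [← E.zpow_mem_iff_of_isUnit hcs, hlast, inv_mem_iff]
    exact list_prod_mem fun y hy => by
      obtain ⟨r, hr, rfl⟩ := List.mem_map.mp hy
      exact zpow_mem (hn r (List.mem_range.mp hr)) _
  have hdown : ∀ n, window n → x (n - 1) ∈ E := by
    intro n hn
    have hfirst := hrec (n - 1)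
    rw [List.prod_range_succ', Int.natCast_zero, add_zero] at hfirst
    replace hfirst := eq_inv_of_mul_eq_one_left hfirst
    rw [← E.zpow_mem_iff_of_isUnit hc0, hfirst, inv_mem_iff]
    exact list_prod_mem fun y hy => by
      obtain ⟨r, hr, rfl⟩ := List.mem_map.mp hy
      have := hn r (List.mem_range.mp hr)
      push_cast
      rw [show n - 1 + (r + 1) = n + r by ring]
      exact zpow_mem this _
  have hwindow : ∀ n, window n := by
    intro n
    induction n using Int.induction_on with
    | zero => simpa [window] using hinit
    | succ n ih =>
      intro r hr
      rcases Nat.lt_or_ge (r + 1) s with h | h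
      · convert ih (r + 1) h using 2; push_cast; ring
      · obtain rfl : s = r + 1 := by omega
        convert hup _ ih using 2; push_cast; ring
    | pred n ih =>
      intro r hr
      rcases r with _ | r
      · simpa using hdown _ ih
      · simpa [sub_add_eq_add_sub, add_sub_assoc, add_comm] using ih r (by omega)
  simpa using hup (n - s) (hwindow _)

end Recurrence

theorem MulAut.iterate_conj_apply {G : Type*} [Group G] (W g : G) (r : ℕ) :
    (fun α => W * α * W⁻¹)^[r] g = (MulAut.conj W ^ r) g := by
  induction r with
  | zero => rfl
  | succ r ih => rw [Function.iterate_succ_apply', ih, pow_succ', MulAut.mul_apply, conj_apply]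

section Displacement

variable {Q : Type*} {L : Q → Equiv.Perm Q}

/-- `Dis(Q)`, for a quandle whose left translations are `L`. -/
def displacementGroup (L : Q → Equiv.Perm Q) : Subgroup (Equiv.Perm Q) :=
  Subgroup.closure {h | ∃ u v : Q, h = L u * (L v)⁻¹}

theorem L_mul_L_inv_mem_displacementGroup (u v : Q) : L u * (L v)⁻¹ ∈ displacementGroup L :=
  Subgroup.subset_closure ⟨u, v, rfl⟩

theorem displacementGroup_le_of_forall_L_mul_L_inv_mem {H : Subgroup (Equiv.Perm Q)} (z : Q)
    (h : ∀ q, L q * (L z)⁻¹ ∈ H) : displacementGroup L ≤ H := by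
  refine (Subgroup.closure_le H).mpr ?_
  rintro _ ⟨u, v, rfl⟩
  simpa [mul_assoc] using mul_mem (h u) (inv_mem (h v))

theorem L_mul_L_mul_L_inv (hld : ∀ x y u, L x (L y u) = L (L x y) (L x u)) (a b : Q) :
    L a * L b * (L a)⁻¹ = L (L a b) := by
  rw [mul_inv_eq_iff_eq_mul]
  ext u
  exact hld a b u

theorem commute_L_mul_L_inv (hld : ∀ x y u, L x (L y u) = L (L x y) (L x u))
    (hmed : ∀ x y u v, L (L x y) (L u v) = L (L x u) (L y v)) (a b c d : Q) :
    Commute (L a * (L b)⁻¹) (L c * (L d)⁻¹) := by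
  have swap : ∀ x y u, L y * (L x)⁻¹ * L u = L u * (L x)⁻¹ * L y := by
    intro x y u
    have h : L (L x y) * L u = L (L x u) * L y := by
      ext v
      exact hmed x y u v
    rw [← L_mul_L_mul_L_inv hld, ← L_mul_L_mul_L_inv hld] at h
    simpa [mul_assoc] using congrArg ((L x)⁻¹ * ·) h
  have swap' : (L b)⁻¹ * L a * (L d)⁻¹ = (L d)⁻¹ * L a * (L b)⁻¹ := by
    simpa [mul_assoc] using (congrArg (·⁻¹) (swap a b d)).symm
  calc L a * (L b)⁻¹ * (L c * (L d)⁻¹)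
      = L c * ((L b)⁻¹ * L a * (L d)⁻¹) := by rw [← mul_assoc, swap b a c]; group
    _ = L c * (L d)⁻¹ * (L a * (L b)⁻¹) := by rw [swap']; group

theorem displacementGroup_le_centralizer (hld : ∀ x y u, L x (L y u) = L (L x y) (L x u))
    (hmed : ∀ x y u v, L (L x y) (L u v) = L (L x u) (L y v)) :
    displacementGroup L ≤ Subgroup.centralizer (displacementGroup L) := by
  rw [displacementGroup, Subgroup.centralizer_closure, Subgroup.closure_le]
  rintro _ ⟨c, d, rfl⟩
  rw [SetLike.mem_coe, Subgroup.mem_centralizer_iff]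
  rintro _ ⟨a, b, rfl⟩
  exact commute_L_mul_L_inv hld hmed a b c d

theorem L_mem_normalizer_displacementGroup (hld : ∀ x y u, L x (L y u) = L (L x y) (L x u))
    (a : Q) : L a ∈ Subgroup.normalizer (displacementGroup L : Set (Equiv.Perm Q)) := by
  refine Subgroup.normalizer_le_normalizer_closure _ (Subgroup.mem_set_normalizer_iff.mpr ?_)
  have hconj : ∀ u v, L a * (L u * (L v)⁻¹) * (L a)⁻¹ = L (L a u) * (L (L a v))⁻¹ := by
    intro u v
    rw [← L_mul_L_mul_L_inv hld, ← L_mul_L_mul_L_inv hld]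
    group
  intro h
  constructor
  · rintro ⟨u, v, rfl⟩
    exact ⟨_, _, hconj u v⟩
  · rintro ⟨u, v, huv⟩
    refine ⟨(L a)⁻¹ u, (L a)⁻¹ v, mul_left_cancel (a := L a) (mul_right_cancel (b := (L a)⁻¹) ?_)⟩
    simp only [hconj, Equiv.Perm.coe_inv, Equiv.apply_symm_apply, huv]

theorem conj_zpow_apply_mem_displacementGroup (hld : ∀ x y u, L x (L y u) = L (L x y) (L x u))
    (w : Q) (n : ℤ) {g : Equiv.Perm Q} (hg : g ∈ displacementGroup L) :
    (MulAut.conj (L w) ^ n) g ∈ displacementGroup L := by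
  rw [← map_zpow, MulAut.conj_apply]
  exact (zpow_mem (L_mem_normalizer_displacementGroup hld w) n g).mp hg

/-- On `Dis(Q)` all left translations induce the same conjugation, since their quotients lie in
the abelian group `Dis(Q)`. -/
theorem L_mul_mul_L_inv_eq_conj (hld : ∀ x y u, L x (L y u) = L (L x y) (L x u))
    (hmed : ∀ x y u v, L (L x y) (L u v) = L (L x u) (L y v)) (a w : Q)
    {g : Equiv.Perm Q} (hg : g ∈ displacementGroup L) :
    L a * g * (L a)⁻¹ = MulAut.conj (L w) g := by
  have hcomm : Commute (L a * (L w)⁻¹) (MulAut.conj (L w) g) :=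
    displacementGroup_le_centralizer hld hmed (conj_zpow_apply_mem_displacementGroup hld w 1
      (by simpa using hg)) _ (L_mul_L_inv_mem_displacementGroup a w)
  rw [MulAut.conj_apply] at hcomm ⊢
  calc L a * g * (L a)⁻¹
      = (L a * (L w)⁻¹) * (L w * g * (L w)⁻¹) * (L a * (L w)⁻¹)⁻¹ := by group
    _ = L w * g * (L w)⁻¹ := by rw [hcomm.eq]; group

theorem L_apply_mul_L_inv_eq_conj (hld : ∀ x y u, L x (L y u) = L (L x y) (L x u))
    (hmed : ∀ x y u v, L (L x y) (L u v) = L (L x u) (L y v)) (w z a b : Q) :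
    L (L a b) * (L z)⁻¹ = MulAut.conj (L w) (L b * (L z)⁻¹) *
      (MulAut.conj (L w) (L a * (L z)⁻¹))⁻¹ * (L a * (L z)⁻¹) := by
  rw [← L_mul_mul_L_inv_eq_conj hld hmed a w (L_mul_L_inv_mem_displacementGroup b z),
    ← L_mul_mul_L_inv_eq_conj hld hmed a w (L_mul_L_inv_mem_displacementGroup a z),
    ← L_mul_L_mul_L_inv hld]
  group

end Displacement

theorem forall_zpow_apply_mem_L_apply_and_inv_apply {Q G : Type*} [Group G] (E : Subgroup G)
    (σ : MulAut G) (L : Q → Equiv.Perm Q) (e : Q → G)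
    (he : ∀ a b, e (L a b) = σ (e b) * (σ (e a))⁻¹ * e a) {a b : Q}
    (ha : ∀ n : ℤ, (σ ^ n) (e a) ∈ E) (hb : ∀ n : ℤ, (σ ^ n) (e b) ∈ E) :
    (∀ n : ℤ, (σ ^ n) (e (L a b)) ∈ E) ∧ ∀ n : ℤ, (σ ^ n) (e ((L a)⁻¹ b)) ∈ E := by
  have shift : ∀ (n : ℤ) x, (σ ^ n) (σ x) = (σ ^ (n + 1)) x := by
    intro n x
    rw [← MulAut.mul_apply, zpow_add_one]
  refine ⟨fun n => ?_, fun n => ?_⟩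
  · rw [he, map_mul, map_mul, map_inv, shift, shift]
    exact mul_mem (mul_mem (hb _) (inv_mem (ha _))) (ha n)
  · have h : σ (e ((L a)⁻¹ b)) = e b * (e a)⁻¹ * σ (e a) := by
      have := he a ((L a)⁻¹ b)
      rw [Equiv.Perm.coe_inv, Equiv.apply_symm_apply] at this
      rw [this, mul_inv_cancel_right, inv_mul_cancel_right, Equiv.Perm.coe_inv]
    rw [← sub_add_cancel n 1, ← shift, h, map_mul, map_mul, map_inv, shift]
    exact mul_mem (mul_mem (hb _) (inv_mem (ha _))) (ha _)

theorem displacement_generators_of_f_quandle_general {Q : Type*} (op : Q → Q → Q)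
    (L : Q → Equiv.Perm Q) (hL : ∀ x y, L x y = op x y)
    (hldist : ∀ x y w, op x (op y w) = op (op x y) (op x w))
    (hmed : ∀ x y u v, op (op x y) (op u v) = op (op x u) (op y v))
    (X : Set Q) (z : Q)
    (hgen : ∀ S : Set Q, X ⊆ S →
      (∀ a b, a ∈ S → b ∈ S → op a b ∈ S ∧ (L a)⁻¹ b ∈ S) → ∀ q, q ∈ S)
    (w : Q) (s : ℕ) (c : ℕ → ℤ)
    (hc0 : c 0 = 1 ∨ c 0 = -1) (hcs : c s = 1 ∨ c s = -1)
    (hf : ∀ g ∈ Subgroup.closure {h : Equiv.Perm Q | ∃ u v : Q, h = L u * (L v)⁻¹},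
      ((List.range (s + 1)).map
        (fun r => ((fun α : Equiv.Perm Q => L w * α * (L w)⁻¹)^[r] g) ^ (c r))).prod = 1) :
    Subgroup.closure {h : Equiv.Perm Q | ∃ u v : Q, h = L u * (L v)⁻¹} =
      Subgroup.closure {h : Equiv.Perm Q | ∃ x ∈ X, x ≠ z ∧ ∃ r < s,
        h = (fun α : Equiv.Perm Q => L w * α * (L w)⁻¹)^[r] (L x * (L z)⁻¹)} := by
  have hld : ∀ x y u, L x (L y u) = L (L x y) (L x u) := by simpa only [hL] using hldist
  have hmed' : ∀ x y u v, L (L x y) (L u v) = L (L x u) (L y v) := by simpa only [hL] using hmed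
  simp only [MulAut.iterate_conj_apply] at hf ⊢
  set σ := MulAut.conj (L w)
  set E := Subgroup.closure {h | ∃ x ∈ X, x ≠ z ∧ ∃ r < s, h = (σ ^ r) (L x * (L z)⁻¹)}
  change displacementGroup L = E
  have hshift : ∀ (r : ℕ) (n : ℤ) y, (σ ^ r) ((σ ^ n) y) = (σ ^ (n + r)) y := by
    intro r n y
    rw [← MulAut.mul_apply, ← zpow_natCast, ← zpow_add, add_comm]
  have hXE : ∀ x ∈ X, ∀ n : ℤ, (σ ^ n) (L x * (L z)⁻¹) ∈ E := by
    intro x hx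
    by_cases hxz : x = z
    · simp [hxz]
    refine E.mem_of_recurrence (fun n => (σ ^ n) (L x * (L z)⁻¹)) s c
      (Int.isUnit_iff.mpr hc0) (Int.isUnit_iff.mpr hcs) (fun n => ?_) (fun r hr => ?_)
    · simpa only [hshift] using hf ((σ ^ n) (L x * (L z)⁻¹))
        (conj_zpow_apply_mem_displacementGroup hld w n (L_mul_L_inv_mem_displacementGroup x z))
    · exact Subgroup.subset_closure ⟨x, hx, hxz, r, hr, by simp⟩
  have hall := hgen {q | ∀ n : ℤ, (σ ^ n) (L q * (L z)⁻¹) ∈ E} hXE fun a b ha hb => by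
    rw [← hL]
    exact forall_zpow_apply_mem_L_apply_and_inv_apply E σ L (fun q => L q * (L z)⁻¹)
      (L_apply_mul_L_inv_eq_conj hld hmed' w z) ha hb
  refine le_antisymm (displacementGroup_le_of_forall_L_mul_L_inv_mem z fun q => by
    simpa using hall q 0) ((Subgroup.closure_le _).mpr ?_)
  rintro _ ⟨x, -, -, r, -, rfl⟩
  exact_mod_cast conj_zpow_apply_mem_displacementGroup hld w r
    (L_mul_L_inv_mem_displacementGroup x z)

/-- Let `f = Σ_{r=0}^{s} c_r t^r` with `c_0, c_s` invertible (i.e. `±1`), and let `Q` be a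
medial `f`-quandle (i.e. `α ^ f(L) = 1` for all `α ∈ Dis(Q)`) generated by `X` with `z ∈ X`.
Then `Dis(Q)` is generated as a group by `{(L_x L_z⁻¹)^{L^r} : x ∈ X∖{z}, 0 ≤ r < s}`. -/
theorem displacement_generators_of_f_quandle {Q : Type*} (op : Q → Q → Q)
    (L : Q → Equiv.Perm Q) (hL : ∀ x y, L x y = op x y)
    (hidem : ∀ x, op x x = x)
    (hldist : ∀ x y w, op x (op y w) = op (op x y) (op x w))
    (hmed : ∀ x y u v, op (op x y) (op u v) = op (op x u) (op y v))
    (X : Set Q) (z : Q) (hz : z ∈ X)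
    (hgen : ∀ S : Set Q, X ⊆ S →
      (∀ a b, a ∈ S → b ∈ S → op a b ∈ S ∧ (L a)⁻¹ b ∈ S) → ∀ q, q ∈ S)
    (w : Q) (s : ℕ) (hs : 1 ≤ s) (c : ℕ → ℤ)
    (hc0 : c 0 = 1 ∨ c 0 = -1) (hcs : c s = 1 ∨ c s = -1)
    (hf : ∀ g ∈ Subgroup.closure {h : Equiv.Perm Q | ∃ u v : Q, h = L u * (L v)⁻¹},
      ((List.range (s + 1)).map
        (fun r => ((fun α : Equiv.Perm Q => L w * α * (L w)⁻¹)^[r] g) ^ (c r))).prod = 1) :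
    Subgroup.closure {h : Equiv.Perm Q | ∃ u v : Q, h = L u * (L v)⁻¹} =
      Subgroup.closure {h : Equiv.Perm Q | ∃ x ∈ X, x ≠ z ∧ ∃ r < s,
        h = (fun α : Equiv.Perm Q => L w * α * (L w)⁻¹)^[r] (L x * (L z)⁻¹)} :=
  displacement_generators_of_f_quandle_general op L hL hldist hmed X z hgen w s c hc0 hcs hf
end
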